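/- arXiv:0809.1079 — 2 statements merged into one kernel-verified Lean document; each statement's English description precedes it below -/
import Mathlib

section
/- The cardinality of ${\mathbb H}_n^* = \{{\mathbf k} \in {\mathbb Z}^{d+1} : \sum_i k_i = 0,\ k_1 \equiv \cdots \equiv k_{d+1} \pmod{d+1},\ -(d+1)n \le k_i - k_j \le (d+1)n \text{ for } i < j\}$ equals $(n+1)^{d+1} - n^{d+1}$. -/
/-!
Write `m` for the number of coordinates. The map `y ↦ m • y - (∑ⱼ yⱼ)` sends integer vectors
with entries in `[0, n]` and at least one zero entry bijectively onto `ℍ_n^*`: the inverse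
subtracts the least coordinate and divides by `m`, the divisibility conditions make this
exact, and the zero-sum condition forces the subtracted minimum to be `-∑ⱼ yⱼ`. Such `y` are
the `(n + 1)^m` points of `[0, n]^m` minus the `n^m` points of `[1, n]^m`.
-/

open Finset

section

variable (ι : Type*) [Fintype ι] (n : ℕ)

def hstar : Set (ι → ℤ) :=
  {k | ∑ i, k i = 0 ∧ (∀ i j, (Fintype.card ι : ℤ) ∣ k i - k j) ∧
    ∀ i j, |k i - k j| ≤ Fintype.card ι * n}

def gridWithZero : Set (ι → ℤ) :=
  {y | (∀ i, 0 ≤ y i ∧ y i ≤ n) ∧ ∃ i, y i = 0}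

def toHstar (y : ι → ℤ) : ι → ℤ :=
  fun i => Fintype.card ι * y i - ∑ j, y j

variable {ι n}

theorem ncard_gridWithZero :
    (gridWithZero ι n).ncard = (n + 1) ^ Fintype.card ι - n ^ Fintype.card ι := by
  classical
  have hgrid : gridWithZero ι n =
      ↑(Fintype.piFinset (fun _ : ι => Icc 0 (n : ℤ)) \
        Fintype.piFinset (fun _ : ι => Icc 1 (n : ℤ))) := by
    ext y
    simp only [gridWithZero, Set.mem_ofPred_eq, coe_sdiff, Set.mem_sdiff, mem_coe,
      Fintype.mem_piFinset, mem_Icc, not_forall]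
    refine and_congr_right fun hy => exists_congr fun i => ?_
    have := hy i
    omega
  rw [hgrid, Set.ncard_coe_finset, card_sdiff_of_subset]
  · simp
  · exact Fintype.piFinset_subset _ _ fun _ => Icc_subset_Icc_left zero_le_one

theorem toHstar_sub_toHstar (y : ι → ℤ) (i j : ι) :
    toHstar ι y i - toHstar ι y j = Fintype.card ι * (y i - y j) := by
  simp only [toHstar]; ring

theorem sum_toHstar (y : ι → ℤ) : ∑ i, toHstar ι y i = 0 := by
  simp [toHstar, sum_sub_distrib, ← mul_sum]

theorem toHstar_mem_hstar {y : ι → ℤ} (hy : y ∈ gridWithZero ι n) : toHstar ι y ∈ hstar ι n := by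
  refine ⟨sum_toHstar y, fun i j => ⟨y i - y j, toHstar_sub_toHstar y i j⟩, fun i j => ?_⟩
  rw [toHstar_sub_toHstar, abs_mul, Nat.abs_cast]
  have := hy.1 i
  have := hy.1 j
  exact mul_le_mul_of_nonneg_left (abs_le.mpr ⟨by linarith, by linarith⟩) (by positivity)

theorem toHstar_injOn : Set.InjOn (toHstar ι) (gridWithZero ι n) := by
  rintro y ⟨hy, i, hyi⟩ y' ⟨hy', j, hy'j⟩ h
  have hdiff : ∀ l, (Fintype.card ι : ℤ) * (y l - y' l) = ∑ l, y l - ∑ l, y' l := fun l => by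
    have := congrFun h l
    simp only [toHstar] at this
    linarith
  have hcard : (0 : ℤ) < Fintype.card ι := by exact_mod_cast Fintype.card_pos_iff.mpr ⟨i⟩
  -- the common value of the differences is `≤ 0` at a zero of `y` and `≥ 0` at a zero of `y'`
  have hsum : ∑ l, y l - ∑ l, y' l = 0 := by
    have hi := hdiff i
    have hj := hdiff j
    rw [hyi, zero_sub, mul_neg] at hi
    rw [hy'j, sub_zero] at hj
    have := mul_nonneg hcard.le (hy' i).1
    have := mul_nonneg hcard.le (hy j).1
    linarith
  funext l
  have := hdiff l
  rw [hsum, mul_eq_zero, sub_eq_zero] at this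
  exact this.resolve_left hcard.ne'

theorem image_toHstar_gridWithZero [Nonempty ι] : toHstar ι '' gridWithZero ι n = hstar ι n := by
  refine (Set.image_subset_iff.mpr fun y => toHstar_mem_hstar).antisymm ?_
  rintro k ⟨hsum, hdvd, hbound⟩
  obtain ⟨i₀, -, hmin⟩ := univ.exists_min_image k univ_nonempty
  choose y hy using fun i => hdvd i i₀
  have hcard : (0 : ℤ) < Fintype.card ι := by exact_mod_cast Fintype.card_pos
  have hsumy : ∑ i, y i = -k i₀ := by
    refine mul_left_cancel₀ hcard.ne' ?_
    simp [mul_sum, ← hy, sum_sub_distrib, hsum]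
  refine ⟨y, ⟨fun i => ⟨?_, ?_⟩, i₀, ?_⟩, ?_⟩
  · refine nonneg_of_mul_nonneg_right ?_ hcard
    rw [← hy]
    exact sub_nonneg.mpr (hmin i (mem_univ i))
  · refine le_of_mul_le_mul_left ?_ hcard
    rw [← hy]
    exact (le_abs_self _).trans (hbound i i₀)
  · simpa [sub_self, hcard.ne'] using (hy i₀).symm
  · funext i
    simp only [toHstar, ← hy, hsumy]
    ring

theorem ncard_hstar [Nonempty ι] :
    (hstar ι n).ncard = (n + 1) ^ Fintype.card ι - n ^ Fintype.card ι := by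
  rw [← image_toHstar_gridWithZero, toHstar_injOn.ncard_image, ncard_gridWithZero]

end

theorem card_Hstar_general (d n : ℕ) :
    Set.ncard {k : Fin (d + 1) → ℤ |
        (∑ i, k i = 0) ∧ (∀ i j : Fin (d + 1), ((d : ℤ) + 1) ∣ (k i - k j)) ∧
        ∀ i j : Fin (d + 1), |k i - k j| ≤ ((d : ℤ) + 1) * n} =
      (n + 1) ^ (d + 1) - n ^ (d + 1) := by
  simpa [hstar] using ncard_hstar (ι := Fin (d + 1)) (n := n)

/-- The cardinality of `ℍ_n^*` is `(n+1)^{d+1} - n^{d+1}`. -/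
theorem card_Hstar (d n : ℕ) (hd : 1 ≤ d) :
    Set.ncard {k : Fin (d + 1) → ℤ |
        (∑ i, k i = 0) ∧ (∀ i j : Fin (d + 1), ((d : ℤ) + 1) ∣ (k i - k j)) ∧
        ∀ i j : Fin (d + 1), |k i - k j| ≤ ((d : ℤ) + 1) * n} =
      (n + 1) ^ (d + 1) - n ^ (d + 1) :=
  card_Hstar_general d n
end

section
/- For any ${\mathbf j}, {\mathbf k} \in {\mathbb H}$, the product of generalized sines satisfies ${\mathsf{TS}}_{\mathbf j}({\mathbf t})\,{\mathsf{TS}}_{\mathbf k}({\mathbf t}) = \frac{1}{(d+1)!}\sum_{\sigma \in S_{d+1}} (-1)^{|\sigma|}\, {\mathsf{TC}}_{{\mathbf k} + {\mathbf j}\sigma}({\mathbf t})$, where $(-1)^{|\sigma|}$ is the sign of $\sigma$. -/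
open Real Complex

/-- The exponential `φ_k(t) = e^{2πi k·t/(d+1)}`. -/
noncomputable def phiH (d : ℕ) (k : Fin (d + 1) → ℤ) (t : Fin (d + 1) → ℝ) : ℂ :=
  Complex.exp (2 * π * Complex.I / ((d : ℂ) + 1) * ∑ i, (k i : ℂ) * (t i : ℂ))

/-- The generalized cosine `TC_k`. -/
noncomputable def TCos (d : ℕ) (k : Fin (d + 1) → ℤ) (t : Fin (d + 1) → ℝ) : ℂ :=
  (1 / (Nat.factorial (d + 1) : ℂ)) * ∑ σ : Equiv.Perm (Fin (d + 1)), phiH d (k ∘ σ) t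

/-- The generalized sine `TS_k`. -/
noncomputable def TSin (d : ℕ) (k : Fin (d + 1) → ℤ) (t : Fin (d + 1) → ℝ) : ℂ :=
  (1 / (Nat.factorial (d + 1) : ℂ)) * ∑ σ : Equiv.Perm (Fin (d + 1)),
    ((Equiv.Perm.sign σ : ℤ) : ℂ) * phiH d (k ∘ σ) t

lemma phiH_add (d : ℕ) (a b : Fin (d + 1) → ℤ) (t : Fin (d + 1) → ℝ) :
    phiH d (fun i => a i + b i) t = phiH d a t * phiH d b t := by
  unfold phiH
  rw [← Complex.exp_add, ← mul_add, ← Finset.sum_add_distrib]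
  congr 2
  refine Finset.sum_congr rfl fun i _ => ?_
  push_cast; ring

/-- Product formula for generalized sines:
`TS_j(t) TS_k(t) = (1/(d+1)!) ∑_σ sgn(σ) TC_{k + jσ}(t)`. -/
theorem TSin_mul_TSin (d : ℕ) (j k : Fin (d + 1) → ℤ)
    (hj : (∑ i, j i = 0) ∧ ∀ a b : Fin (d + 1), ((d : ℤ) + 1) ∣ (j a - j b))
    (hk : (∑ i, k i = 0) ∧ ∀ a b : Fin (d + 1), ((d : ℤ) + 1) ∣ (k a - k b))
    (t : Fin (d + 1) → ℝ) (ht : ∑ i, t i = 0) :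
    TSin d j t * TSin d k t =
      (1 / (Nat.factorial (d + 1) : ℂ)) *
        ∑ σ : Equiv.Perm (Fin (d + 1)),
          ((Equiv.Perm.sign σ : ℤ) : ℂ) * TCos d (k + j ∘ σ) t := by
  classical
  set N : ℂ := (Nat.factorial (d + 1) : ℂ) with hN
  have key : ∀ σ ρ : Equiv.Perm (Fin (d + 1)),
      phiH d ((k + j ∘ σ) ∘ ρ) t = phiH d (k ∘ ρ) t * phiH d (j ∘ ⇑(σ * ρ)) t := by
    intro σ ρ
    rw [← phiH_add]
    rfl
  -- rewrite RHS
  have hR : ∀ σ : Equiv.Perm (Fin (d + 1)),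
      ((Equiv.Perm.sign σ : ℤ) : ℂ) * TCos d (k + j ∘ σ) t
        = (1 / N) * ∑ ρ : Equiv.Perm (Fin (d + 1)),
            ((Equiv.Perm.sign σ : ℤ) : ℂ) *
              (phiH d (k ∘ ρ) t * phiH d (j ∘ ⇑(σ * ρ)) t) := by
    intro σ
    rw [TCos, ← Finset.mul_sum, mul_left_comm]
    congr 2
    exact Finset.sum_congr rfl fun ρ _ => key σ ρ
  have hswap :
      ∑ σ : Equiv.Perm (Fin (d + 1)), ∑ ρ : Equiv.Perm (Fin (d + 1)),
          ((Equiv.Perm.sign σ : ℤ) : ℂ) *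
            (phiH d (k ∘ ρ) t * phiH d (j ∘ ⇑(σ * ρ)) t)
        = ∑ ρ : Equiv.Perm (Fin (d + 1)), ∑ σ : Equiv.Perm (Fin (d + 1)),
            (((Equiv.Perm.sign σ : ℤ) : ℂ) * ((Equiv.Perm.sign ρ : ℤ) : ℂ)) *
              (phiH d (k ∘ ρ) t * phiH d (j ∘ σ) t) := by
    rw [Finset.sum_comm]
    refine Finset.sum_congr rfl fun ρ _ => ?_
    refine Fintype.sum_equiv (Equiv.mulRight ρ) _ _ fun σ => ?_
    simp only [Equiv.coe_mulRight]
    have hs : ((Equiv.Perm.sign (σ * ρ) : ℤ) : ℂ) * ((Equiv.Perm.sign ρ : ℤ) : ℂ)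
        = ((Equiv.Perm.sign σ : ℤ) : ℂ) := by
      rw [Equiv.Perm.sign_mul]
      push_cast
      have : ((Equiv.Perm.sign ρ : ℤ) : ℂ) * ((Equiv.Perm.sign ρ : ℤ) : ℂ) = 1 := by
        rcases Int.units_eq_one_or (Equiv.Perm.sign ρ) with h | h <;> rw [h] <;> norm_num
      push_cast
      rw [mul_assoc, this, mul_one]
    rw [hs]
  calc TSin d j t * TSin d k t
      = (1 / N) * (1 / N) *
          ((∑ σ : Equiv.Perm (Fin (d + 1)), ((Equiv.Perm.sign σ : ℤ) : ℂ) * phiH d (j ∘ σ) t) *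
           (∑ ρ : Equiv.Perm (Fin (d + 1)), ((Equiv.Perm.sign ρ : ℤ) : ℂ) * phiH d (k ∘ ρ) t)) := by
        rw [TSin, TSin]; ring
    _ = (1 / N) * (1 / N) *
          ∑ ρ : Equiv.Perm (Fin (d + 1)), ∑ σ : Equiv.Perm (Fin (d + 1)),
            (((Equiv.Perm.sign σ : ℤ) : ℂ) * ((Equiv.Perm.sign ρ : ℤ) : ℂ)) *
              (phiH d (k ∘ ρ) t * phiH d (j ∘ σ) t) := by
        rw [Finset.sum_mul_sum]
        congr 1
        rw [Finset.sum_comm]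
        refine Finset.sum_congr rfl fun ρ _ => Finset.sum_congr rfl fun σ _ => by ring
    _ = (1 / N) * ∑ σ : Equiv.Perm (Fin (d + 1)),
          ((Equiv.Perm.sign σ : ℤ) : ℂ) * TCos d (k + j ∘ σ) t := by
        rw [← hswap]
        rw [Finset.sum_congr rfl fun σ _ => hR σ]
        rw [← Finset.mul_sum]
        ring
end
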